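/- arXiv:2403.01662 — 2 statements merged into one kernel-verified Lean document; each statement's English description precedes it below -/
import Mathlib

section
/- In any triangulation of a triangle whose three corner vertices are colored with three distinct colors 1, 2, 3, and whose boundary vertices on the edge between corners colored i and j are each colored i or j, if every interior vertex is also assigned one of the three colors, then there exists a small triangle of the triangulation whose three vertices receive all three distinct colors (a rainbow triangle). -/
open Finset

/-- Indicator (in `ZMod 2`) that an edge has colors `{0,1}`. -/
private def ee (x y : Fin 3) : ZMod 2 :=
  if (x = 0 ∧ y = 1) ∨ (x = 1 ∧ y = 0) then 1 else 0

private lemma ee_tri (x y z : Fin 3) (h : ¬(x ≠ y ∧ x ≠ z ∧ y ≠ z)) :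
    ee x y + ee x z + ee y z = 0 := by
  revert h; revert x y z; decide

private lemma ee_12 (x y : Fin 3) (hx : x = 1 ∨ x = 2) (hy : y = 1 ∨ y = 2) :
    ee x y = 0 := by
  revert hx hy; revert x y; decide

private lemma ee_02 (x y : Fin 3) (hx : x = 0 ∨ x = 2) (hy : y = 0 ∨ y = 2) :
    ee x y = 0 := by
  revert hx hy; revert x y; decide

private lemma one_dim (n : ℕ) (f : ℕ → Fin 3) (h0 : f 0 = 0) (hn : f n = 1)
    (hb : ∀ i ≤ n, f i = 0 ∨ f i = 1) :
    ∑ i ∈ range n, ee (f i) (f (i+1)) = 1 := by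
  have H : ∀ k ≤ n, ∑ i ∈ range k, ee (f i) (f (i+1)) = if f k = 0 then 0 else 1 := by
    intro k hk
    induction k with
    | zero => simp [h0]
    | succ k ih =>
      rw [sum_range_succ, ih (by omega)]
      rcases hb k (by omega) with h1 | h1 <;> rcases hb (k+1) (by omega) with h2 | h2 <;>
        simp [h1, h2, ee] <;> decide
  rw [H n le_rfl, hn]
  decide

private def hE (c : ℕ → ℕ → Fin 3) (i j : ℕ) : ZMod 2 := ee (c i j) (c (i+1) j)
private def vE (c : ℕ → ℕ → Fin 3) (i j : ℕ) : ZMod 2 := ee (c i j) (c i (j+1))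
private def dE (c : ℕ → ℕ → Fin 3) (i j : ℕ) : ZMod 2 := ee (c (i+1) j) (c i (j+1))

private lemma key (n : ℕ) (hn : 1 ≤ n) (c : ℕ → ℕ → Fin 3) :
    (∑ j ∈ range n, ∑ i ∈ range (n - j), (hE c i j + vE c i j + dE c i j))
      + (∑ j ∈ range n, ∑ i ∈ range (n - 1 - j), (dE c i j + vE c (i+1) j + hE c i (j+1)))
    = (∑ j ∈ range n, dE c (n-1-j) j) + (∑ j ∈ range n, vE c 0 j)
      + (∑ i ∈ range n, hE c i 0) := by
  obtain ⟨m, rfl⟩ : ∃ m, n = m + 1 := ⟨n - 1, by omega⟩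
  simp only [Nat.add_sub_cancel]
  have expand : ∀ j ∈ range (m+1),
      ∑ i ∈ range (m + 1 - j), (hE c i j + vE c i j + dE c i j)
      = (∑ i ∈ range (m + 1 - j), hE c i j) + (∑ i ∈ range (m + 1 - j), vE c i j)
        + (∑ i ∈ range (m + 1 - j), dE c i j) := by
    intro j _; rw [sum_add_distrib, sum_add_distrib]
  have expand2 : ∀ j ∈ range (m+1),
      ∑ i ∈ range (m - j), (dE c i j + vE c (i+1) j + hE c i (j+1))
      = (∑ i ∈ range (m - j), dE c i j) + (∑ i ∈ range (m - j), vE c (i+1) j)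
        + (∑ i ∈ range (m - j), hE c i (j+1)) := by
    intro j _; rw [sum_add_distrib, sum_add_distrib]
  rw [sum_congr rfl expand, sum_congr rfl expand2, sum_add_distrib, sum_add_distrib,
    sum_add_distrib, sum_add_distrib]
  have hd : (∑ j ∈ range (m+1), ∑ i ∈ range (m + 1 - j), dE c i j)
      + (∑ j ∈ range (m+1), ∑ i ∈ range (m - j), dE c i j)
      = ∑ j ∈ range (m+1), dE c (m-j) j := by
    rw [← sum_add_distrib]
    apply sum_congr rfl
    intro j hj
    have hj' : j < m + 1 := mem_range.mp hj
    have h1 : m + 1 - j = (m - j) + 1 := by omega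
    rw [h1, sum_range_succ, add_comm, ← add_assoc, CharTwo.add_self_eq_zero, zero_add]
  have hv : (∑ j ∈ range (m+1), ∑ i ∈ range (m + 1 - j), vE c i j)
      + (∑ j ∈ range (m+1), ∑ i ∈ range (m - j), vE c (i+1) j)
      = ∑ j ∈ range (m+1), vE c 0 j := by
    rw [← sum_add_distrib]
    apply sum_congr rfl
    intro j hj
    have hj' : j < m + 1 := mem_range.mp hj
    have h1 : m + 1 - j = (m - j) + 1 := by omega
    rw [h1, sum_range_succ', add_assoc, add_comm, add_assoc, CharTwo.add_self_eq_zero, add_zero]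
  have hh : (∑ j ∈ range (m+1), ∑ i ∈ range (m + 1 - j), hE c i j)
      + (∑ j ∈ range (m+1), ∑ i ∈ range (m - j), hE c i (j+1))
      = ∑ i ∈ range (m+1), hE c i 0 := by
    rw [sum_range_succ' (fun j => ∑ i ∈ range (m + 1 - j), hE c i j) m,
      sum_range_succ (fun j => ∑ i ∈ range (m - j), hE c i (j+1)) m]
    simp only [Nat.add_sub_add_right, Nat.sub_self, range_zero, sum_empty, add_zero,
      Nat.sub_zero]
    rw [add_right_comm, CharTwo.add_self_eq_zero, zero_add]
  calc _ = ((∑ j ∈ range (m+1), ∑ i ∈ range (m + 1 - j), dE c i j)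
            + (∑ j ∈ range (m+1), ∑ i ∈ range (m - j), dE c i j))
          + ((∑ j ∈ range (m+1), ∑ i ∈ range (m + 1 - j), vE c i j)
            + (∑ j ∈ range (m+1), ∑ i ∈ range (m - j), vE c (i+1) j))
          + ((∑ j ∈ range (m+1), ∑ i ∈ range (m + 1 - j), hE c i j)
            + (∑ j ∈ range (m+1), ∑ i ∈ range (m - j), hE c i (j+1))) := by ring
    _ = _ := by rw [hd, hv, hh]

/-- Sperner's lemma in dimension 2, on the triangulated triangle
`{(i,j) : i + j ≤ n}` with corners `(0,0)`, `(n,0)`, `(0,n)` colored `0,1,2`. -/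
theorem sperner_two_dim (n : ℕ) (hn : 1 ≤ n) (c : ℕ → ℕ → Fin 3)
    (hc00 : c 0 0 = 0) (hcn0 : c n 0 = 1) (hc0n : c 0 n = 2)
    (hedge01 : ∀ i ≤ n, c i 0 = 0 ∨ c i 0 = 1)
    (hedge02 : ∀ j ≤ n, c 0 j = 0 ∨ c 0 j = 2)
    (hedge12 : ∀ i j, i + j = n → c i j = 1 ∨ c i j = 2) :
    ∃ i j : ℕ,
      (i + j + 1 ≤ n ∧ c i j ≠ c (i+1) j ∧ c i j ≠ c i (j+1) ∧ c (i+1) j ≠ c i (j+1)) ∨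
      (i + j + 2 ≤ n ∧ c (i+1) j ≠ c i (j+1) ∧ c (i+1) j ≠ c (i+1) (j+1) ∧
        c i (j+1) ≠ c (i+1) (j+1)) := by
  by_contra hcon
  -- no rainbow triangle: every triangle contributes 0
  have hU : ∀ i j, i + j + 1 ≤ n → hE c i j + vE c i j + dE c i j = 0 := by
    intro i j hij
    apply ee_tri
    rintro ⟨h1, h2, h3⟩
    exact hcon ⟨i, j, Or.inl ⟨hij, h1, h2, h3⟩⟩
  have hD : ∀ i j, i + j + 2 ≤ n → dE c i j + vE c (i+1) j + hE c i (j+1) = 0 := by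
    intro i j hij
    apply ee_tri
    rintro ⟨h1, h2, h3⟩
    exact hcon ⟨i, j, Or.inr ⟨hij, h1, h2, h3⟩⟩
  have hkey := key n hn c
  -- left side is 0
  have L0 : (∑ j ∈ range n, ∑ i ∈ range (n - j), (hE c i j + vE c i j + dE c i j))
      + (∑ j ∈ range n, ∑ i ∈ range (n - 1 - j), (dE c i j + vE c (i+1) j + hE c i (j+1)))
      = 0 := by
    rw [sum_eq_zero, sum_eq_zero, add_zero]
    · intro j hj
      apply sum_eq_zero
      intro i hi
      exact hD i j (by have := mem_range.mp hi; have := mem_range.mp hj; omega)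
    · intro j hj
      apply sum_eq_zero
      intro i hi
      exact hU i j (by have := mem_range.mp hi; have := mem_range.mp hj; omega)
  rw [L0] at hkey
  -- diagonal boundary terms vanish
  have D0 : (∑ j ∈ range n, dE c (n-1-j) j) = 0 := by
    apply sum_eq_zero
    intro j hj
    have hj' : j < n := mem_range.mp hj
    apply ee_12
    · exact hedge12 _ _ (by omega)
    · exact hedge12 _ _ (by omega)
  -- left boundary terms vanish
  have V0 : (∑ j ∈ range n, vE c 0 j) = 0 := by
    apply sum_eq_zero
    intro j hj
    have hj' : j < n := mem_range.mp hj
    exact ee_02 _ _ (hedge02 j (by omega)) (hedge02 (j+1) (by omega))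
  rw [D0, V0, zero_add, zero_add] at hkey
  -- bottom edge sum is 1
  have B1 : (∑ i ∈ range n, hE c i 0) = 1 :=
    one_dim n (fun i => c i 0) hc00 hcn0 (fun i hi => hedge01 i hi)
  rw [B1] at hkey
  exact absurd hkey (by decide)
end

section
/- Consider a 'path' sequence of nodes p₀, p₁, ..., p_L in the triangular lattice such that d(pᵢ, pᵢ₊₁) ≤ 2 for each i, and such that for each i, the only uncolored nodes within distance 2 of pᵢ among the relevant set are pᵢ₋₁ and pᵢ₊₁. Then in Atropos-2 play entering the path at p₀, the nodes are colored in order p₀, p₁, ..., p_L, with players alternating, and the player coloring p_L is the starting player iff L is even. -/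
/-- Hexagonal distance on the triangular lattice `ℤ²`. -/
def hexDist (u v : ℤ × ℤ) : ℕ :=
  max (v.1 - u.1).natAbs (max (v.2 - u.2).natAbs ((v.1 - u.1) + (v.2 - u.2)).natAbs)

/-- The path gadget: `p 0, …, p L` are the uncolored nodes, consecutive ones within
hexagonal distance 2, and each path node has only its predecessor and successor among
the uncolored nodes within distance 2.  Then any legal Atropos-2 play `q` entering
the path at `p 0` (each move colors an uncolored node within distance 2 of the
previous one) traverses the nodes exactly in the order `p 0, …, p L`, with the
players alternating; the player coloring `p L` (move index `L`, the starting player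
making the even-indexed moves) is the starting player iff `L` is even. -/
theorem path_gadget_forced (L : ℕ) (p q : Fin (L+1) → ℤ × ℤ)
    (hpinj : Function.Injective p)
    (hpd : ∀ i : Fin L, hexDist (p i.castSucc) (p i.succ) ≤ 2)
    (hnbr : ∀ i j : Fin (L+1), i ≠ j → hexDist (p i) (p j) ≤ 2 →
      (j.1 = i.1 + 1 ∨ i.1 = j.1 + 1))
    (hq0 : q 0 = p 0)
    (hqinj : Function.Injective q)
    (hqmem : ∀ i : Fin (L+1), ∃ j : Fin (L+1), q i = p j)
    (hqd : ∀ i : Fin L, hexDist (q i.castSucc) (q i.succ) ≤ 2)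
    (mover : ℕ → Fin 2) (hmover : ∀ t : ℕ, mover t = 0 ↔ Even t) :
    (∀ i : Fin (L+1), q i = p i) ∧ (mover L = 0 ↔ Even L) := by
  have key : ∀ n (h : n < L + 1), q ⟨n, h⟩ = p ⟨n, h⟩ := by
    intro n
    induction n using Nat.strong_induction_on with
    | _ n ih =>
      intro h
      match n, h with
      | 0, h => exact hq0
      | Nat.succ m, h =>
        have hmL : m < L := Nat.lt_of_succ_lt_succ h
        have hm1 : m < L + 1 := by omega
        obtain ⟨j, hj⟩ := hqmem ⟨m + 1, h⟩
        have hqm : q ⟨m, hm1⟩ = p ⟨m, hm1⟩ := ih m (Nat.lt_succ_self m) hm1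
        have hd := hqd ⟨m, hmL⟩
        have hcs : (⟨m, hmL⟩ : Fin L).castSucc = ⟨m, hm1⟩ := rfl
        have hsc : (⟨m, hmL⟩ : Fin L).succ = ⟨m + 1, h⟩ := rfl
        rw [hcs, hsc, hqm, hj] at hd
        have hne : (⟨m, hm1⟩ : Fin (L+1)) ≠ j := by
          intro he
          have : q ⟨m + 1, h⟩ = q ⟨m, hm1⟩ := by rw [hj, hqm, he]
          have := hqinj this
          simp [Fin.ext_iff] at this
        rcases hnbr ⟨m, hm1⟩ j hne hd with h1 | h2
        · have : j = ⟨m + 1, h⟩ := Fin.ext h1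
          rw [hj, this]
        · exfalso
          have h2' : m = j.1 + 1 := h2
          have hjlt : j.1 < m + 1 := by omega
          have hq' : q ⟨j.1, j.2⟩ = p ⟨j.1, j.2⟩ := ih j.1 hjlt j.2
          have hjeq : (⟨j.1, j.2⟩ : Fin (L+1)) = j := rfl
          rw [hjeq] at hq'
          have : q ⟨m + 1, h⟩ = q ⟨j.1, j.2⟩ := by
            rw [hj, ← hq']
          have := hqinj this
          simp [Fin.ext_iff] at this
          omega
  refine ⟨fun i => ?_, hmover L⟩
  have := key i.1 i.2
  simpa using this
end
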